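/- Van Lambalgen forward direction (abstract form): Let 'decidable set' be given by a countable family of subsets of 2^ω closed under the operations used below, and define x to be random iff x lies in no meager decidable set, and b to be random relative to a iff b lies in no meager a-decidable set. Assume: (i) every decidable set X ⊆ 2^ω has the Baire property, as does each section; (ii) for every decidable X, the set Y := {x | {y | x ⊕ y ∈ X} is non-meager} is decidable, and for each a the section S_a := {y | a ⊕ y ∈ X} is a-decidable. Then: if a ⊕ b is not random, then a is not random or b is not random relative to a. -/
import Mathlib


noncomputable def interleave (x y : ℕ → Bool) : ℕ → Bool :=
  fun n => if n % 2 = 0 then x (n / 2) else y (n / 2)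

open Set Topology Filter

lemma IsNowhereDense.mono' {Y : Type*} [TopologicalSpace Y] {s t : Set Y}
    (h : s ⊆ t) (ht : IsNowhereDense t) : IsNowhereDense s :=
  Set.eq_empty_of_subset_empty (ht ▸ interior_mono (closure_mono h))

/-- Sections of a nowhere dense set are residually nowhere dense. -/
lemma section_isNowhereDense {X Y : Type*} [TopologicalSpace X] [TopologicalSpace Y]
    [SecondCountableTopology Y]
    {F : Set (X × Y)} (hF : IsNowhereDense F) :
    ∀ᵇ x : X, IsNowhereDense {y | (x, y) ∈ F} := by
  obtain ⟨B, hBc, hBne, hB⟩ := TopologicalSpace.exists_countable_basis Y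
  have hCnd : IsNowhereDense (closure F) := hF.closure
  obtain ⟨hDo, hDd⟩ := isClosed_isNowhereDense_iff_compl.mp ⟨isClosed_closure, hCnd⟩
  have hmem : (⋂ V ∈ B, {x : X | ∃ y ∈ V, (x, y) ∈ (closure F)ᶜ}) ∈ residual X := by
    refine (countable_bInter_mem hBc).mpr fun V hV => residual_of_dense_open ?_ ?_
    · have hE : {x : X | ∃ y ∈ V, (x, y) ∈ (closure F)ᶜ}
          = Prod.fst '' ((closure F)ᶜ ∩ univ ×ˢ V) := by
        ext x
        simp only [mem_setOf_eq, mem_image, mem_inter_iff, mem_prod, mem_univ, true_and,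
          Prod.exists]
        constructor
        · rintro ⟨y, hyV, hyD⟩; exact ⟨x, y, ⟨hyD, hyV⟩, rfl⟩
        · rintro ⟨x', y, ⟨hyD, hyV⟩, rfl⟩; exact ⟨y, hyV, hyD⟩
      rw [hE]
      exact isOpenMap_fst _ (hDo.inter (isOpen_univ.prod (hB.isOpen hV)))
    · rw [dense_iff_inter_open]
      intro U hUo hUne
      have hVne : V.Nonempty := Set.nonempty_iff_ne_empty.mpr (fun h => hBne (h ▸ hV))
      obtain ⟨p, hpU, hpD⟩ := hDd.inter_open_nonempty (U ×ˢ V) (hUo.prod (hB.isOpen hV))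
        (hUne.prod hVne)
      exact ⟨p.1, hpU.1, p.2, hpU.2, hpD⟩
  filter_upwards [hmem] with x hx
  have hxsec : ∀ V ∈ B, ∃ y ∈ V, (x, y) ∈ (closure F)ᶜ := by
    simpa using hx
  have hclosed : IsClosed {y | (x, y) ∈ closure F} :=
    isClosed_closure.preimage (Continuous.prodMk_right x)
  have hdense : Dense {y | (x, y) ∈ (closure F)ᶜ} := by
    rw [hB.dense_iff]
    intro o ho hone
    obtain ⟨y, hyo, hyD⟩ := hxsec o ho
    exact ⟨y, hyo, hyD⟩
  have hnd : IsNowhereDense {y | (x, y) ∈ closure F} :=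
    (isClosed_isNowhereDense_iff_compl.mpr ⟨hDo.preimage (Continuous.prodMk_right x), hdense⟩).2
  have hsub2 : {y | (x, y) ∈ F} ⊆ {y | (x, y) ∈ closure F} := fun y hy => subset_closure hy
  exact IsNowhereDense.mono' hsub2 hnd

/-- Kuratowski–Ulam, easy direction: if `A` is meager in the product then the set of
points whose section is non-meager is meager. -/
lemma kuratowskiUlam_sections {X Y : Type*} [TopologicalSpace X] [TopologicalSpace Y]
    [SecondCountableTopology Y]
    {A : Set (X × Y)} (hA : IsMeagre A) :
    IsMeagre {x : X | ¬ IsMeagre {y | (x, y) ∈ A}} := by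
  obtain ⟨S, hSnd, hSc, hsub⟩ := isMeagre_iff_countable_union_isNowhereDense.mp hA
  have h1 : ∀ᵇ x : X, ∀ F ∈ S, IsNowhereDense {y | (x, y) ∈ F} :=
    (eventually_countable_ball hSc).mpr fun F hF => section_isNowhereDense (hSnd F hF)
  have h2 : ∀ᵇ x : X, IsMeagre {y | (x, y) ∈ A} := by
    filter_upwards [h1] with x hx
    refine isMeagre_iff_countable_union_isNowhereDense.mpr
      ⟨(fun F => {y | (x, y) ∈ F}) '' S, ?_, hSc.image _, ?_⟩
    · rintro t ⟨F, hF, rfl⟩; exact hx F hF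
    · intro y hy
      obtain ⟨F, hF, hyF⟩ := hsub hy
      exact ⟨{y | (x, y) ∈ F}, ⟨F, hF, rfl⟩, hyF⟩
  exact Filter.mem_of_superset h2 (fun x hx => not_not.mpr hx)

/-- Interleaving as a homeomorphism between the product of two Cantor spaces and Cantor space. -/
noncomputable def interleaveHomeo : ((ℕ → Bool) × (ℕ → Bool)) ≃ₜ (ℕ → Bool) where
  toFun p := interleave p.1 p.2
  invFun z := (fun n => z (2 * n), fun n => z (2 * n + 1))
  left_inv p := by
    ext n <;> simp only [interleave] <;>
      [rw [if_pos (by omega), (by omega : 2 * n / 2 = n)];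
       rw [if_neg (by omega), (by omega : (2 * n + 1) / 2 = n)]]
  right_inv z := by
    funext n
    simp only [interleave]
    by_cases h : n % 2 = 0
    · rw [if_pos h]; congr 1; omega
    · rw [if_neg h]; congr 1; omega
  continuous_toFun := by
    refine continuous_pi fun n => ?_
    simp only [interleave]
    by_cases h : n % 2 = 0
    · simp only [if_pos h]
      exact (continuous_apply (n / 2)).comp continuous_fst
    · simp only [if_neg h]
      exact (continuous_apply (n / 2)).comp continuous_snd
  continuous_invFun := by
    refine Continuous.prodMk ?_ ?_ <;> exact continuous_pi fun n => continuous_apply _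

/-- Van Lambalgen, forward direction (abstract form). `F` is the countable family
of decidable sets, `Fa a` the family of `a`-decidable sets. -/
theorem vanLambalgen_forward
    (F : Set (Set (ℕ → Bool))) (Fa : (ℕ → Bool) → Set (Set (ℕ → Bool)))
    (hFc : F.Countable) (hFac : ∀ a, (Fa a).Countable)
    -- (i) every decidable set has the Baire property, as does its interleaved copy
    (hBP : ∀ X ∈ F, BaireMeasurableSet X)
    (hBPprod : ∀ X ∈ F,
      BaireMeasurableSet {p : (ℕ → Bool) × (ℕ → Bool) | interleave p.1 p.2 ∈ X})
    (hBPa : ∀ a, ∀ X ∈ Fa a, BaireMeasurableSet X)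
    -- (ii) closure: the non-meager-section set is decidable, sections are a-decidable
    (hY : ∀ X ∈ F, {x : ℕ → Bool | ¬ IsMeagre {y | interleave x y ∈ X}} ∈ F)
    (hSec : ∀ X ∈ F, ∀ a : ℕ → Bool, {y : ℕ → Bool | interleave a y ∈ X} ∈ Fa a)
    (a b : ℕ → Bool)
    (hnr : ∃ X ∈ F, IsMeagre X ∧ interleave a b ∈ X) :
    (∃ X ∈ F, IsMeagre X ∧ a ∈ X) ∨ (∃ X ∈ Fa a, IsMeagre X ∧ b ∈ X) := by
  obtain ⟨X, hXF, hXm, hab⟩ := hnr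
  have hPm : IsMeagre {p : (ℕ → Bool) × (ℕ → Bool) | interleave p.1 p.2 ∈ X} :=
    hXm.preimage_of_isOpenMap interleaveHomeo.continuous interleaveHomeo.isOpenMap
  have hYm : IsMeagre {x : ℕ → Bool | ¬ IsMeagre {y | interleave x y ∈ X}} :=
    kuratowskiUlam_sections hPm
  by_cases h : IsMeagre {y | interleave a y ∈ X}
  · exact Or.inr ⟨_, hSec X hXF a, h, hab⟩
  · exact Or.inl ⟨_, hY X hXF, hYm, h⟩
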